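/- arXiv:2503.16369 — 15 statements merged into one kernel-verified Lean document; each statement's English description precedes it below -/
import Mathlib

section
/- (Mother Fluctuation Relation) For every measurable function Z : Ω → [0,∞], the expectation of Z under Q equals the expectation under P of exp(−Σ^{P,Q})·(Z∘R); that is, ∫ Z dQ = ∫ exp(−Σ^{P,Q}(ω)) Z(R(ω)) dP(ω), as an equality in [0,∞]. -/
open MeasureTheory

/-- **Mother Fluctuation Relation.**
`Ω` is a measurable space, `P` and `Q` probability measures on `Ω`, `R` a measurable
bijection with measurable inverse `Rinv`.  `Q ∘ R` is the pushforward of `Q` under `Rinv`,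
assumed absolutely continuous with respect to `P`.  The scalar entropic functional
`Sg : Ω → ℝ` satisfies `exp (-Sg) = d(Q∘R)/dP` `P`-a.e.  Then for every measurable
`Z : Ω → [0,∞]` one has `∫ Z dQ = ∫ exp (-Sg ω) * Z (R ω) dP ω`, in `[0,∞]`. -/
theorem mother_fluctuation_relation
    {Ω : Type*} [MeasurableSpace Ω]
    (P Q : Measure Ω) [IsProbabilityMeasure P] [IsProbabilityMeasure Q]
    (R Rinv : Ω → Ω) (hR : Measurable R) (hRinv : Measurable Rinv)
    (hli : Function.LeftInverse Rinv R) (hri : Function.RightInverse Rinv R)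
    (hac : Q.map Rinv ≪ P)
    (Sg : Ω → ℝ) (hSgmeas : Measurable Sg)
    (hSg : ∀ᵐ ω ∂P, (Q.map Rinv).rnDeriv P ω = ENNReal.ofReal (Real.exp (-Sg ω)))
    (Z : Ω → ENNReal) (hZ : Measurable Z) :
    ∫⁻ ω, Z ω ∂Q = ∫⁻ ω, ENNReal.ofReal (Real.exp (-Sg ω)) * Z (R ω) ∂P := by
  have h1 : ∫⁻ ω, Z (R ω) ∂(Q.map Rinv) = ∫⁻ ω, Z ω ∂Q := by
    rw [lintegral_map (show Measurable fun ω => Z (R ω) from hZ.comp hR) hRinv]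
    exact lintegral_congr fun ω => by rw [hri ω]
  have h2 : ∫⁻ ω, Z (R ω) ∂(Q.map Rinv)
      = ∫⁻ ω, (Q.map Rinv).rnDeriv P ω * Z (R ω) ∂P := by
    conv_lhs => rw [← Measure.withDensity_rnDeriv_eq _ _ hac]
    exact lintegral_withDensity_eq_lintegral_mul _ (Measure.measurable_rnDeriv _ _) (hZ.comp hR)
  rw [← h1, h2]
  exact lintegral_congr_ae (hSg.mono fun ω h => by dsimp only; rw [h])
end

section
/- (Generalized Second Law) If Σ^{P,Q} is P-integrable, then its P-expectation equals the Kullback–Leibler divergence of P with respect to Q∘R, i.e. ∫ Σ^{P,Q} dP = D_KL(P ‖ Q∘R), and consequently ∫ Σ^{P,Q} dP ≥ 0. -/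
open MeasureTheory

/-- **Generalized Second Law.**
`P`, `Q` probability measures, `R` a measurable bijection with measurable inverse `Rinv`;
`Q∘R = Q.map Rinv` and `P` are mutually absolutely continuous; the entropic functional
`Sg` satisfies `exp (-Sg) = d(Q∘R)/dP` `P`-a.e.  If `Sg` is `P`-integrable then its
`P`-expectation equals the Kullback–Leibler divergence `∫ log (dP/d(Q∘R)) dP`, and in
particular it is nonnegative. -/
theorem generalized_second_law
    {Ω : Type*} [MeasurableSpace Ω]
    (P Q : Measure Ω) [IsProbabilityMeasure P] [IsProbabilityMeasure Q]
    (R Rinv : Ω → Ω) (hR : Measurable R) (hRinv : Measurable Rinv)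
    (hli : Function.LeftInverse Rinv R) (hri : Function.RightInverse Rinv R)
    (hac : Q.map Rinv ≪ P) (hac' : P ≪ Q.map Rinv)
    (Sg : Ω → ℝ) (hSgmeas : Measurable Sg)
    (hSg : ∀ᵐ ω ∂P, (Q.map Rinv).rnDeriv P ω = ENNReal.ofReal (Real.exp (-Sg ω)))
    (hint : Integrable Sg P) :
    (∫ ω, Sg ω ∂P = ∫ ω, Real.log ((P.rnDeriv (Q.map Rinv) ω).toReal) ∂P) ∧
    0 ≤ ∫ ω, Sg ω ∂P := by
  set μ := Q.map Rinv with hμ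
  have hprob : IsProbabilityMeasure μ := Measure.isProbabilityMeasure_map hRinv.aemeasurable
  -- first part: integrands are a.e. equal
  have hinv : ((μ.rnDeriv P)⁻¹ : Ω → ENNReal) =ᵐ[P] P.rnDeriv μ :=
    Measure.inv_rnDeriv' hac'
  have h1 : ∫ ω, Sg ω ∂P = ∫ ω, Real.log ((P.rnDeriv μ ω).toReal) ∂P := by
    refine integral_congr_ae ?_
    filter_upwards [hSg, hinv] with ω h h'
    have hpos : 0 < Real.exp (-Sg ω) := Real.exp_pos _
    have : P.rnDeriv μ ω = ENNReal.ofReal (Real.exp (Sg ω)) := by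
      rw [← h', Pi.inv_apply, h, ← ENNReal.ofReal_inv_of_pos hpos, ← Real.exp_neg, neg_neg]
    rw [this, ENNReal.toReal_ofReal (Real.exp_pos _).le, Real.log_exp]
  refine ⟨h1, ?_⟩
  -- second part: Sg ω ≥ 1 - (μ.rnDeriv P ω).toReal a.e.
  have hfi : Integrable (fun ω => (μ.rnDeriv P ω).toReal) P :=
    Measure.integrable_toReal_rnDeriv
  have hmono : ∀ᵐ ω ∂P, 1 - (μ.rnDeriv P ω).toReal ≤ Sg ω := by
    filter_upwards [hSg] with ω h
    have hpos : (0:ℝ) < Real.exp (-Sg ω) := Real.exp_pos _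
    have hlog := Real.log_le_sub_one_of_pos hpos
    rw [Real.log_exp] at hlog
    rw [h, ENNReal.toReal_ofReal hpos.le]
    linarith
  have hle : ∫ ω, (1 - (μ.rnDeriv P ω).toReal) ∂P ≤ ∫ ω, Sg ω ∂P :=
    integral_mono_ae ((integrable_const 1).sub hfi) hint hmono
  have hint1 : ∫ ω, (1 - (μ.rnDeriv P ω).toReal) ∂P = 0 := by
    rw [integral_sub (integrable_const 1) hfi, integral_const,
      Measure.integral_toReal_rnDeriv hac]
    simp
  linarith
end

section
/- (Duality relation for involutions) If R is an involution, i.e. R∘R = id, then the entropic functionals satisfy the duality Σ^{P,Q}(R(ω)) = −Σ^{Q,P}(ω) for Q-almost every ω. -/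
open MeasureTheory

/-- **Duality relation for involutions.**
`R` is a measurable involution (`R ∘ R = id`, so `R` is its own inverse and the
pushforward under `R⁻¹` is the pushforward under `R`).  `Q.map R` and `P` are mutually
absolutely continuous, as are `P.map R` and `Q`.  The entropic functionals satisfy
`exp (-Spq) = d(Q∘R)/dP` `P`-a.e. and `exp (-Sqp) = d(P∘R)/dQ` `Q`-a.e.  Then
`Spq (R ω) = - Sqp ω` for `Q`-almost every `ω`. -/
theorem duality_relation_involution
    {Ω : Type*} [MeasurableSpace Ω]
    (P Q : Measure Ω) [IsProbabilityMeasure P] [IsProbabilityMeasure Q]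
    (R : Ω → Ω) (hR : Measurable R) (hinv : ∀ ω, R (R ω) = ω)
    (hac1 : Q.map R ≪ P) (hac2 : P ≪ Q.map R)
    (hac3 : P.map R ≪ Q) (hac4 : Q ≪ P.map R)
    (Spq Sqp : Ω → ℝ) (hSpqmeas : Measurable Spq) (hSqpmeas : Measurable Sqp)
    (hSpq : ∀ᵐ ω ∂P, (Q.map R).rnDeriv P ω = ENNReal.ofReal (Real.exp (-Spq ω)))
    (hSqp : ∀ᵐ ω ∂Q, (P.map R).rnDeriv Q ω = ENNReal.ofReal (Real.exp (-Sqp ω))) :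
    ∀ᵐ ω ∂Q, Spq (R ω) = -Sqp ω := by
  -- R as a measurable equivalence
  let e : Ω ≃ᵐ Ω :=
    { toFun := R, invFun := R, left_inv := hinv, right_inv := hinv,
      measurable_toFun := hR, measurable_invFun := hR }
  have hemb : MeasurableEmbedding R := e.measurableEmbedding
  -- (Q.map R).map R = Q
  have hQQ : (Q.map R).map R = Q := by
    rw [Measure.map_map hR hR]
    have : R ∘ R = id := funext hinv
    rw [this, Measure.map_id]
  -- step 1: rnDeriv transported along R
  have L := hemb.rnDeriv_map (Q.map R) P
  rw [hQQ] at L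
  have h1 : ∀ᵐ y ∂(P.map R), Q.rnDeriv (P.map R) y = (Q.map R).rnDeriv P (R y) := by
    rw [hemb.ae_map_iff]
    filter_upwards [L] with x hx
    rw [hinv]
    exact hx
  have h1' : ∀ᵐ y ∂Q, (Q.map R).rnDeriv P (R y) = Q.rnDeriv (P.map R) y := by
    filter_upwards [hac4.ae_le h1] with y hy using hy.symm
  -- step 2: inverse rnDeriv
  have h2 : Q.rnDeriv (P.map R) =ᵐ[Q] (fun x ↦ ((P.map R).rnDeriv Q x)⁻¹) := by
    have := Measure.inv_rnDeriv (μ := Q) (ν := P.map R) hac4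
    filter_upwards [this] with x hx
    rw [← hx]
    simp
  -- step 3: transport hSpq to Q-a.e. statement about R ω
  have hSpq' : ∀ᵐ ω ∂Q, (Q.map R).rnDeriv P (R ω) = ENNReal.ofReal (Real.exp (-Spq (R ω))) := by
    exact hemb.ae_map_iff.mp (hac1.ae_le hSpq)
  filter_upwards [hSpq', h1', h2, hSqp] with ω hA hB hC hD
  have key : ENNReal.ofReal (Real.exp (-Spq (R ω))) = (ENNReal.ofReal (Real.exp (-Sqp ω)))⁻¹ := by
    rw [← hA, ← hD, hB, hC]
  rw [← ENNReal.ofReal_inv_of_pos (Real.exp_pos _), ← Real.exp_neg, neg_neg] at key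
  have hexp : Real.exp (-Spq (R ω)) = Real.exp (Sqp ω) :=
    (ENNReal.ofReal_eq_ofReal_iff (Real.exp_pos _).le (Real.exp_pos _).le).mp key
  have := Real.exp_injective hexp
  linarith
end

section
/- (Finite-time duality fluctuation relation, Laplace version) If R is an involution, then for every k ∈ ℝ one has the equality in [0,∞]: ∫ exp(k·Σ^{Q,P}) dQ = ∫ exp(−(k+1)·Σ^{P,Q}) dP. -/
open MeasureTheory

/-- **Finite-time duality fluctuation relation, Laplace version.**
With `R` a measurable involution, `Q.map R` mutually absolutely continuous with `P`,
`P.map R` mutually absolutely continuous with `Q`, and entropic functionals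
`exp (-Spq) = d(Q∘R)/dP` `P`-a.e., `exp (-Sqp) = d(P∘R)/dQ` `Q`-a.e., one has, for every
`k : ℝ`, the equality in `[0,∞]`:
`∫ exp (k * Sqp) dQ = ∫ exp (-(k+1) * Spq) dP`. -/
theorem duality_fluctuation_relation_laplace
    {Ω : Type*} [MeasurableSpace Ω]
    (P Q : Measure Ω) [IsProbabilityMeasure P] [IsProbabilityMeasure Q]
    (R : Ω → Ω) (hR : Measurable R) (hinv : ∀ ω, R (R ω) = ω)
    (hac1 : Q.map R ≪ P) (hac2 : P ≪ Q.map R)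
    (hac3 : P.map R ≪ Q) (hac4 : Q ≪ P.map R)
    (Spq Sqp : Ω → ℝ) (hSpqmeas : Measurable Spq) (hSqpmeas : Measurable Sqp)
    (hSpq : ∀ᵐ ω ∂P, (Q.map R).rnDeriv P ω = ENNReal.ofReal (Real.exp (-Spq ω)))
    (hSqp : ∀ᵐ ω ∂Q, (P.map R).rnDeriv Q ω = ENNReal.ofReal (Real.exp (-Sqp ω))) :
    ∀ k : ℝ,
      ∫⁻ ω, ENNReal.ofReal (Real.exp (k * Sqp ω)) ∂Q
        = ∫⁻ ω, ENNReal.ofReal (Real.exp (-(k + 1) * Spq ω)) ∂P := by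
  intro k
  -- `R` as a measurable embedding
  have hEmb : MeasurableEmbedding R :=
    (MeasurableEquiv.mk ⟨R, R, hinv, hinv⟩ hR hR).measurableEmbedding
  have hQmap : (Q.map R).map R = Q := by
    rw [Measure.map_map hR hR]
    have : R ∘ R = id := funext hinv
    rw [this, Measure.map_id]
  have : IsProbabilityMeasure (Q.map R) := Measure.isProbabilityMeasure_map hR.aemeasurable
  have : IsProbabilityMeasure (P.map R) := Measure.isProbabilityMeasure_map hR.aemeasurable
  -- Key a.e. identity: Sqp ω = -Spq (R ω) a.e. Q
  have h1 : (fun x ↦ (P.map R).rnDeriv ((Q.map R).map R) (R x)) =ᵐ[Q.map R]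
      P.rnDeriv (Q.map R) := hEmb.rnDeriv_map P (Q.map R)
  rw [hQmap] at h1
  have h2 : ((Q.map R).rnDeriv P)⁻¹ =ᵐ[Q.map R] P.rnDeriv (Q.map R) :=
    Measure.inv_rnDeriv hac1
  have hSpq' : ∀ᵐ ω ∂(Q.map R), (Q.map R).rnDeriv P ω = ENNReal.ofReal (Real.exp (-Spq ω)) :=
    hac1.ae_le hSpq
  have h3 : ∀ᵐ ω ∂(Q.map R),
      (P.map R).rnDeriv Q (R ω) = ENNReal.ofReal (Real.exp (Spq ω)) := by
    filter_upwards [h1, h2, hSpq'] with ω hω1 hω2 hω3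
    rw [hω1, ← hω2, Pi.inv_apply, hω3,
      ← ENNReal.ofReal_inv_of_pos (Real.exp_pos _), ← Real.exp_neg, neg_neg]
  have h4 : ∀ᵐ ω ∂Q, (P.map R).rnDeriv Q ω = ENNReal.ofReal (Real.exp (Spq (R ω))) := by
    have := (hEmb.ae_map_iff.mp h3)
    filter_upwards [this] with ω hω
    rw [hinv] at hω
    exact hω
  have hkey : ∀ᵐ ω ∂Q, Sqp ω = -Spq (R ω) := by
    filter_upwards [hSqp, h4] with ω hω1 hω2
    have : ENNReal.ofReal (Real.exp (-Sqp ω)) = ENNReal.ofReal (Real.exp (Spq (R ω))) := by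
      rw [← hω1, hω2]
    rw [ENNReal.ofReal_eq_ofReal_iff (Real.exp_pos _).le (Real.exp_pos _).le,
      Real.exp_eq_exp] at this
    linarith
  -- compute
  calc ∫⁻ ω, ENNReal.ofReal (Real.exp (k * Sqp ω)) ∂Q
      = ∫⁻ ω, ENNReal.ofReal (Real.exp (-k * Spq (R ω))) ∂Q := by
        refine lintegral_congr_ae ?_
        filter_upwards [hkey] with ω hω
        rw [hω]; ring_nf
    _ = ∫⁻ ω, ENNReal.ofReal (Real.exp (-k * Spq ω)) ∂(Q.map R) := by
        rw [lintegral_map (by fun_prop) hR]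
    _ = ∫⁻ ω, ENNReal.ofReal (Real.exp (-k * Spq ω)) ∂(P.withDensity ((Q.map R).rnDeriv P)) := by
        rw [Measure.withDensity_rnDeriv_eq _ _ hac1]
    _ = ∫⁻ ω, (Q.map R).rnDeriv P ω * ENNReal.ofReal (Real.exp (-k * Spq ω)) ∂P := by
        rw [lintegral_withDensity_eq_lintegral_mul _ (Measure.measurable_rnDeriv _ _)
          (by fun_prop)]
        rfl
    _ = ∫⁻ ω, ENNReal.ofReal (Real.exp (-(k + 1) * Spq ω)) ∂P := by
        refine lintegral_congr_ae ?_
        filter_upwards [hSpq] with ω hω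
        rw [hω, ← ENNReal.ofReal_mul (Real.exp_pos _).le, ← Real.exp_add]
        ring_nf
end

section
/- (Finite-time duality fluctuation relation, measure version) If R is an involution, then the law of Σ^{Q,P} under Q equals the law of −Σ^{P,Q} under P reweighted by the density σ ↦ exp(σ); that is, the pushforward measure Q∘(Σ^{Q,P})⁻¹ equals the measure (P∘(−Σ^{P,Q})⁻¹) with density σ ↦ exp(σ). -/
open MeasureTheory

open scoped ENNReal

private lemma map_withDensity_aux {Ω α : Type*} [MeasurableSpace Ω] [MeasurableSpace α]
    (μ : Measure Ω) (f : Ω → α) (hf : Measurable f) (g : α → ℝ≥0∞) (hg : Measurable g) :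
    (μ.map f).withDensity g = (μ.withDensity (g ∘ f)).map f := by
  ext s hs
  rw [withDensity_apply _ hs, Measure.map_apply hf hs, withDensity_apply _ (hf hs),
    setLIntegral_map hs hg hf]
  rfl

/-- **Finite-time duality fluctuation relation, measure version.**
With `R` a measurable involution, `Q.map R` mutually absolutely continuous with `P`,
`P.map R` mutually absolutely continuous with `Q`, and entropic functionals
`exp (-Spq) = d(Q∘R)/dP` `P`-a.e., `exp (-Sqp) = d(P∘R)/dQ` `Q`-a.e., the law of `Sqp`
under `Q` equals the law of `-Spq` under `P` reweighted by the density `σ ↦ exp σ`. -/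
theorem duality_fluctuation_relation_measure
    {Ω : Type*} [MeasurableSpace Ω]
    (P Q : Measure Ω) [IsProbabilityMeasure P] [IsProbabilityMeasure Q]
    (R : Ω → Ω) (hR : Measurable R) (hinv : ∀ ω, R (R ω) = ω)
    (hac1 : Q.map R ≪ P) (hac2 : P ≪ Q.map R)
    (hac3 : P.map R ≪ Q) (hac4 : Q ≪ P.map R)
    (Spq Sqp : Ω → ℝ) (hSpqmeas : Measurable Spq) (hSqpmeas : Measurable Sqp)
    (hSpq : ∀ᵐ ω ∂P, (Q.map R).rnDeriv P ω = ENNReal.ofReal (Real.exp (-Spq ω)))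
    (hSqp : ∀ᵐ ω ∂Q, (P.map R).rnDeriv Q ω = ENNReal.ofReal (Real.exp (-Sqp ω))) :
    Q.map Sqp
      = (P.map (fun ω => -Spq ω)).withDensity (fun σ => ENNReal.ofReal (Real.exp σ)) := by
  set e : Ω → ℝ≥0∞ := fun ω => ENNReal.ofReal (Real.exp (-Spq ω)) with he
  set e' : Ω → ℝ≥0∞ := fun ω => ENNReal.ofReal (Real.exp (-Sqp ω)) with he'
  have heM : Measurable e := ENNReal.measurable_ofReal.comp (Real.measurable_exp.comp hSpqmeas.neg)
  have he'M : Measurable e' := ENNReal.measurable_ofReal.comp (Real.measurable_exp.comp hSqpmeas.neg)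
  have hRR : ∀ μ : Measure Ω, (μ.map R).map R = μ := by
    intro μ
    rw [Measure.map_map hR hR]
    have : R ∘ R = id := funext hinv
    rw [this, Measure.map_id]
  have h1 : Q.map R = P.withDensity e := by
    rw [← Measure.withDensity_rnDeriv_eq _ _ hac1]
    exact withDensity_congr_ae hSpq
  have h2 : P.map R = Q.withDensity e' := by
    rw [← Measure.withDensity_rnDeriv_eq _ _ hac3]
    exact withDensity_congr_ae hSqp
  have hstep : (Q.withDensity e').map R = (Q.map R).withDensity (e' ∘ R) := by
    rw [map_withDensity_aux Q R hR (e' ∘ R) (he'M.comp hR)]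
    have : (e' ∘ R) ∘ R = e' := funext fun ω => by simp [Function.comp, hinv ω]
    rw [this]
  have h3 : P = P.withDensity (e * e' ∘ R) := by
    conv_lhs => rw [← hRR P, h2, hstep, h1, ← withDensity_mul P heM (he'M.comp hR)]
  have h4 : (e * e' ∘ R) =ᵐ[P] fun _ => (1 : ℝ≥0∞) := by
    have hm : Measurable (e * e' ∘ R) := heM.mul (he'M.comp hR)
    have h := Measure.rnDeriv_withDensity P hm
    rw [← h3] at h
    exact h.symm.trans (Measure.rnDeriv_self P)
  have h5 : (Sqp ∘ R) =ᵐ[P] fun ω => -Spq ω := by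
    filter_upwards [h4] with ω hω
    simp only [Pi.mul_apply, Function.comp_apply] at hω
    have h7 : ENNReal.ofReal (Real.exp (-Spq ω) * Real.exp (-Sqp (R ω))) = 1 := by
      rw [ENNReal.ofReal_mul (Real.exp_nonneg _)]
      exact hω
    rw [← Real.exp_add, ENNReal.ofReal_eq_one, Real.exp_eq_one_iff] at h7
    show Sqp (R ω) = -Spq ω
    linarith
  have h6 : (Sqp ∘ R) =ᵐ[P.withDensity e] fun ω => -Spq ω :=
    (withDensity_absolutelyContinuous P e) h5
  calc Q.map Sqp = ((Q.map R).map R).map Sqp := by rw [hRR]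
    _ = (Q.map R).map (Sqp ∘ R) := Measure.map_map hSqpmeas hR
    _ = (P.withDensity e).map (Sqp ∘ R) := by rw [h1]
    _ = (P.withDensity e).map (fun ω => -Spq ω) := Measure.map_congr h6
    _ = (P.map (fun ω => -Spq ω)).withDensity (fun σ => ENNReal.ofReal (Real.exp σ)) := by
        rw [map_withDensity_aux P (fun ω => -Spq ω) hSpqmeas.neg
          (fun σ => ENNReal.ofReal (Real.exp σ))
          (ENNReal.measurable_ofReal.comp Real.measurable_exp)]
        rfl
end

section
/- (Finite-time Fluctuation Relation, Radon–Nikodym form) Under the decomposition and covariance hypothesis, the law of A under P has density a ↦ exp(−⟨w, 𝓡⁻¹a⟩) with respect to the law of 𝓡A under P; that is, P∘A⁻¹ equals the measure (P∘(𝓡∘A)⁻¹) with density a ↦ exp(−⟨w, 𝓡⁻¹a⟩). -/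
open MeasureTheory Matrix

lemma map_withDensity_comp_aux {α β : Type*} [MeasurableSpace α] [MeasurableSpace β]
    (μ : Measure α) (f : α → β) (hf : Measurable f) (g : β → ENNReal) (hg : Measurable g) :
    (μ.map f).withDensity g = (μ.withDensity (fun a => g (f a))).map f := by
  ext s hs
  rw [withDensity_apply _ hs, Measure.map_apply hf hs, withDensity_apply _ (hf hs),
    setLIntegral_map hs hg hf]

/-- **Finite-time Fluctuation Relation, Radon–Nikodym form.**
`P` a probability measure, `R` a measurable bijection with measurable inverse `Rinv`,
`P.map Rinv` mutually absolutely continuous with `P`, and `Sg` the entropic functional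
`exp (-Sg) = d(P∘R)/dP` `P`-a.e.  Under the decomposition and covariance hypothesis
(`Sg ω = ⟪w, A ω⟫` `P`-a.e. and `A (R ω) = 𝓡 *ᵥ A ω` for all `ω`, with `𝓡` invertible),
the law of `A` under `P` equals the law of `𝓡 *ᵥ A` under `P` with density
`a ↦ exp (-⟪w, 𝓡⁻¹ *ᵥ a⟫)`. -/
theorem finite_time_FR_radon_nikodym
    {Ω : Type*} [MeasurableSpace Ω]
    (P : Measure Ω) [IsProbabilityMeasure P]
    (R Rinv : Ω → Ω) (hR : Measurable R) (hRinv : Measurable Rinv)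
    (hli : Function.LeftInverse Rinv R) (hri : Function.RightInverse Rinv R)
    (hac : P.map Rinv ≪ P) (hac' : P ≪ P.map Rinv)
    (Sg : Ω → ℝ) (hSgmeas : Measurable Sg)
    (hSg : ∀ᵐ ω ∂P, (P.map Rinv).rnDeriv P ω = ENNReal.ofReal (Real.exp (-Sg ω)))
    {n : ℕ} (hn : 1 ≤ n)
    (A : Ω → (Fin n → ℝ)) (hA : Measurable A)
    (w : Fin n → ℝ) (𝓡 : Matrix (Fin n) (Fin n) ℝ) (h𝓡 : IsUnit 𝓡.det)
    (hdec : ∀ᵐ ω ∂P, Sg ω = w ⬝ᵥ A ω)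
    (hcov : ∀ ω, A (R ω) = 𝓡 *ᵥ A ω) :
    P.map A
      = (P.map (fun ω => 𝓡 *ᵥ A ω)).withDensity
          (fun a => ENNReal.ofReal (Real.exp (-(w ⬝ᵥ (𝓡⁻¹ *ᵥ a))))) := by
  have hARmeas : Measurable (fun ω => 𝓡 *ᵥ A ω) :=
    (Matrix.mulVecLin 𝓡).continuous_of_finiteDimensional.measurable.comp hA
  have hgmeas : Measurable (fun a : Fin n → ℝ =>
      ENNReal.ofReal (Real.exp (-(w ⬝ᵥ (𝓡⁻¹ *ᵥ a))))) := by
    apply Measurable.ennreal_ofReal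
    apply (Real.continuous_exp.measurable).comp
    apply Measurable.neg
    simp only [dotProduct, Matrix.mulVec]
    exact Finset.measurable_sum _ fun i _ => (measurable_const.mul
      (Finset.measurable_sum _ fun j _ => measurable_const.mul (measurable_pi_apply j)))
  rw [map_withDensity_comp_aux P _ hARmeas _ hgmeas]
  have hcancel : ∀ ω, 𝓡⁻¹ *ᵥ (𝓡 *ᵥ A ω) = A ω := by
    intro ω
    rw [Matrix.mulVec_mulVec, Matrix.nonsing_inv_mul _ h𝓡, Matrix.one_mulVec]
  have hdens : (fun ω => ENNReal.ofReal (Real.exp (-(w ⬝ᵥ (𝓡⁻¹ *ᵥ (𝓡 *ᵥ A ω))))))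
      =ᵐ[P] (P.map Rinv).rnDeriv P := by
    filter_upwards [hdec, hSg] with ω h1 h2
    rw [hcancel ω, ← h1, h2]
  rw [withDensity_congr_ae hdens, Measure.withDensity_rnDeriv_eq _ _ hac]
  rw [Measure.map_map hARmeas hRinv]
  have : ((fun ω => 𝓡 *ᵥ A ω) ∘ Rinv) = A := by
    funext ω
    simp only [Function.comp_apply, ← hcov, hri ω]
  rw [this]
end

section
/- (Finite-time Fluctuation Relation, moment generating function form) Under the decomposition and covariance hypothesis, for every k ∈ ℝⁿ one has the equality in [0,∞]: ∫ exp⟨k, A⟩ dP = ∫ exp⟨𝓡ᵀk − w, A⟩ dP, where 𝓡ᵀ is the transpose of 𝓡. -/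
open MeasureTheory Matrix

/-- **Finite-time Fluctuation Relation, moment generating function form.**
Under the decomposition and covariance hypothesis (`Sg ω = ⟪w, A ω⟫` `P`-a.e. and
`A (R ω) = 𝓡 *ᵥ A ω` for all `ω`, with `𝓡` invertible), for every `k ∈ ℝⁿ` one has, in
`[0,∞]`, `∫ exp ⟪k, A⟫ dP = ∫ exp ⟪𝓡ᵀ k - w, A⟫ dP`. -/
theorem finite_time_FR_mgf
    {Ω : Type*} [MeasurableSpace Ω]
    (P : Measure Ω) [IsProbabilityMeasure P]
    (R Rinv : Ω → Ω) (hR : Measurable R) (hRinv : Measurable Rinv)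
    (hli : Function.LeftInverse Rinv R) (hri : Function.RightInverse Rinv R)
    (hac : P.map Rinv ≪ P) (hac' : P ≪ P.map Rinv)
    (Sg : Ω → ℝ) (hSgmeas : Measurable Sg)
    (hSg : ∀ᵐ ω ∂P, (P.map Rinv).rnDeriv P ω = ENNReal.ofReal (Real.exp (-Sg ω)))
    {n : ℕ} (hn : 1 ≤ n)
    (A : Ω → (Fin n → ℝ)) (hA : Measurable A)
    (w : Fin n → ℝ) (𝓡 : Matrix (Fin n) (Fin n) ℝ) (h𝓡 : IsUnit 𝓡.det)
    (hdec : ∀ᵐ ω ∂P, Sg ω = w ⬝ᵥ A ω)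
    (hcov : ∀ ω, A (R ω) = 𝓡 *ᵥ A ω) :
    ∀ k : Fin n → ℝ,
      ∫⁻ ω, ENNReal.ofReal (Real.exp (k ⬝ᵥ A ω)) ∂P
        = ∫⁻ ω, ENNReal.ofReal (Real.exp ((𝓡ᵀ *ᵥ k - w) ⬝ᵥ A ω)) ∂P := by
  intro k
  have hdot : ∀ (v : Fin n → ℝ), Measurable fun ω => v ⬝ᵥ A ω := by
    intro v
    unfold dotProduct
    exact Finset.measurable_sum _ fun i _ =>
      measurable_const.mul ((measurable_pi_apply i).comp hA)
  have hg : Measurable fun ω => ENNReal.ofReal (Real.exp (k ⬝ᵥ A (R ω))) :=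
    (ENNReal.measurable_ofReal.comp Real.measurable_exp).comp ((hdot k).comp hR)
  have step1 : ∫⁻ ω, ENNReal.ofReal (Real.exp (k ⬝ᵥ A ω)) ∂P
      = ∫⁻ ω, ENNReal.ofReal (Real.exp (k ⬝ᵥ A (R ω))) ∂(P.map Rinv) := by
    rw [lintegral_map hg hRinv]
    simp only [hri _]
  have step2 : ∫⁻ ω, ENNReal.ofReal (Real.exp (k ⬝ᵥ A (R ω))) ∂(P.map Rinv)
      = ∫⁻ ω, (P.map Rinv).rnDeriv P ω * ENNReal.ofReal (Real.exp (k ⬝ᵥ A (R ω))) ∂P :=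
    (lintegral_rnDeriv_mul hac hg.aemeasurable).symm
  rw [step1, step2]
  refine lintegral_congr_ae ?_
  filter_upwards [hSg, hdec] with ω h1 h2
  rw [h1, h2, hcov ω, ← ENNReal.ofReal_mul (Real.exp_pos _).le, ← Real.exp_add,
    sub_dotProduct, Matrix.mulVec_transpose, ← Matrix.dotProduct_mulVec]
  ring_nf
end

section
/- (Asymptotic Fluctuation Relation for the scaled cumulant generating function) Suppose that for each T ≥ 1 the entropic functional admits the weaker decomposition Σ_T = ⟨w, A_T⟩ + B_T with A_T∘R_T = 𝓡A_T and sup_{Ω_T}|B_T|/T → 0 as T → ∞, and that for every k ∈ ℝⁿ the limit Λ(k) := lim_{T→∞} (1/T) log ∫ exp⟨k, A_T⟩ dP_T exists and is finite. Then Λ((𝓡ᵀ)⁻¹ k) = Λ(k − w) for every k ∈ ℝⁿ. -/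
open MeasureTheory Matrix Filter

/-- **Asymptotic Fluctuation Relation for the scaled cumulant generating function.**
For each real time `T ≥ 1`, `Ω T` is a measurable space carrying a probability measure
`P T`, `R T` is a measurable bijection with measurable inverse `Rinv T` such that the
pushforward `(P T).map (Rinv T)` is mutually absolutely continuous with `P T`, and
`Sg T` is the entropic functional, `exp (-(Sg T)) = d((P T)∘(R T))/d(P T)` a.e.
Assume the weaker decomposition `Sg T ω = ⟪w, A T ω⟫ + B T ω` (`P T`-a.e.) with the
covariance `A T ∘ R T = 𝓡 *ᵥ A T`, each `B T` bounded, `sup |B T| / T → 0`, and for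
every `k` the scaled cumulant generating function limit
`Λ k = lim_{T→∞} (1/T) log ∫ exp ⟪k, A T⟫ d(P T)` exists (and is finite).
Then `Λ ((𝓡ᵀ)⁻¹ *ᵥ k) = Λ (k - w)` for every `k`. -/
theorem asymptotic_fluctuation_relation
    {n : ℕ} (hn : 1 ≤ n)
    (w : Fin n → ℝ) (𝓡 : Matrix (Fin n) (Fin n) ℝ) (h𝓡 : IsUnit 𝓡.det)
    (Ω : ℝ → Type*) (mΩ : ∀ T, MeasurableSpace (Ω T))
    (P : ∀ T, Measure (Ω T)) (hprob : ∀ T, 1 ≤ T → IsProbabilityMeasure (P T))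
    (R Rinv : ∀ T, Ω T → Ω T)
    (hR : ∀ T, 1 ≤ T → Measurable (R T)) (hRinv : ∀ T, 1 ≤ T → Measurable (Rinv T))
    (hli : ∀ T, 1 ≤ T → Function.LeftInverse (Rinv T) (R T))
    (hri : ∀ T, 1 ≤ T → Function.RightInverse (Rinv T) (R T))
    (hac : ∀ T, 1 ≤ T → (P T).map (Rinv T) ≪ P T)
    (hac' : ∀ T, 1 ≤ T → P T ≪ (P T).map (Rinv T))
    (Sg : ∀ T, Ω T → ℝ)
    (hSg : ∀ T, 1 ≤ T → ∀ᵐ ω ∂(P T),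
      ((P T).map (Rinv T)).rnDeriv (P T) ω = ENNReal.ofReal (Real.exp (-(Sg T ω))))
    (A : ∀ T, Ω T → (Fin n → ℝ)) (hA : ∀ T, 1 ≤ T → Measurable (A T))
    (B : ∀ T, Ω T → ℝ) (hBmeas : ∀ T, 1 ≤ T → Measurable (B T))
    (hBbd : ∀ T, 1 ≤ T → ∃ C : ℝ, ∀ ω, |B T ω| ≤ C)
    (hdec : ∀ T, 1 ≤ T → ∀ᵐ ω ∂(P T), Sg T ω = w ⬝ᵥ A T ω + B T ω)
    (hcov : ∀ T, 1 ≤ T → ∀ ω, A T (R T ω) = 𝓡 *ᵥ A T ω)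
    (hBlim : Tendsto (fun T : ℝ => (⨆ ω : Ω T, |B T ω|) / T) atTop (nhds 0))
    (Λ : (Fin n → ℝ) → ℝ)
    (hΛ : ∀ k : Fin n → ℝ, Tendsto
      (fun T : ℝ =>
        Real.log ((∫⁻ ω, ENNReal.ofReal (Real.exp (k ⬝ᵥ A T ω)) ∂(P T)).toReal) / T)
      atTop (nhds (Λ k))) :
    ∀ k : Fin n → ℝ, Λ ((𝓡ᵀ)⁻¹ *ᵥ k) = Λ (k - w) := by
  intro k
  set k' : Fin n → ℝ := (𝓡ᵀ)⁻¹ *ᵥ k with hk'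
  have hdet : IsUnit (𝓡ᵀ).det := by rwa [Matrix.det_transpose]
  have halg : ∀ x : Fin n → ℝ, k' ⬝ᵥ (𝓡 *ᵥ x) = k ⬝ᵥ x := by
    intro x
    rw [Matrix.dotProduct_mulVec, ← Matrix.mulVec_transpose]
    congr 1
    rw [hk', Matrix.mulVec_mulVec, Matrix.mul_nonsing_inv _ hdet, Matrix.one_mulVec]
  -- the key per-time bound
  have key : ∀ T : ℝ, 1 ≤ T →
      |Real.log ((∫⁻ ω, ENNReal.ofReal (Real.exp (k' ⬝ᵥ A T ω)) ∂(P T)).toReal) -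
        Real.log ((∫⁻ ω, ENNReal.ofReal (Real.exp ((k - w) ⬝ᵥ A T ω)) ∂(P T)).toReal)| ≤
      ⨆ ω : Ω T, |B T ω| := by
    intro T hT
    haveI := hprob T hT
    haveI : IsProbabilityMeasure ((P T).map (Rinv T)) :=
      Measure.isProbabilityMeasure_map (hRinv T hT).aemeasurable
    set ε : ℝ := ⨆ ω : Ω T, |B T ω| with hεdef
    obtain ⟨C, hC⟩ := hBbd T hT
    have hbdd : BddAbove (Set.range fun ω => |B T ω|) := by
      refine ⟨C, ?_⟩; rintro _ ⟨ω, rfl⟩; exact hC ω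
    have hε : ∀ ω, |B T ω| ≤ ε := fun ω => le_ciSup hbdd ω
    have hne : Nonempty (Ω T) := by
      by_contra h
      have h0 : (P T) Set.univ = 0 := by
        rw [Set.univ_eq_empty_iff.2 (not_nonempty_iff.1 h)]; exact measure_empty
      rw [measure_univ] at h0; exact one_ne_zero h0
    obtain ⟨ω₀⟩ := hne
    have hε0 : 0 ≤ ε := le_trans (abs_nonneg _) (hε ω₀)
    -- measurability
    have mdot : ∀ c : Fin n → ℝ,
        Measurable fun ω => ENNReal.ofReal (Real.exp (c ⬝ᵥ A T ω)) := by
      intro c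
      apply ENNReal.measurable_ofReal.comp
      apply Real.measurable_exp.comp
      simp only [dotProduct]
      exact Finset.measurable_sum _ fun i _ =>
        measurable_const.mul ((measurable_pi_apply i).comp (hA T hT))
    have hZne : ∀ c : Fin n → ℝ,
        (∫⁻ ω, ENNReal.ofReal (Real.exp (c ⬝ᵥ A T ω)) ∂(P T)) ≠ 0 := by
      intro c h
      rw [lintegral_eq_zero_iff (mdot c)] at h
      have hFalse : ∀ᵐ ω ∂(P T), False := by
        filter_upwards [h] with ω hω
        have : (0 : ℝ) < Real.exp (c ⬝ᵥ A T ω) := Real.exp_pos _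
        simp only [Pi.zero_apply, ENNReal.ofReal_eq_zero] at hω
        linarith
      rw [Filter.eventually_false_iff_eq_bot, ae_eq_bot] at hFalse
      exact IsProbabilityMeasure.ne_zero (P T) hFalse
    -- step A : change of variables
    have stepA : (∫⁻ ω, ENNReal.ofReal (Real.exp (k ⬝ᵥ A T ω)) ∂((P T).map (Rinv T))) =
        ∫⁻ ω, ENNReal.ofReal (Real.exp (k' ⬝ᵥ A T ω)) ∂(P T) := by
      rw [lintegral_map (mdot k) (hRinv T hT)]
      refine lintegral_congr fun ω => ?_
      have h1 : ENNReal.ofReal (Real.exp (k ⬝ᵥ A T (Rinv T ω))) =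
          ENNReal.ofReal (Real.exp (k' ⬝ᵥ A T (R T (Rinv T ω)))) := by
        rw [hcov T hT (Rinv T ω), halg]
      rw [h1, hri T hT ω]
    -- step B : Radon–Nikodym
    have hwd : (P T).withDensity (((P T).map (Rinv T)).rnDeriv (P T)) = (P T).map (Rinv T) :=
      Measure.withDensity_rnDeriv_eq _ _ (hac T hT)
    have stepB : (∫⁻ ω, ENNReal.ofReal (Real.exp (k ⬝ᵥ A T ω)) ∂((P T).map (Rinv T))) =
        ∫⁻ ω, (((P T).map (Rinv T)).rnDeriv (P T) ω) *
          ENNReal.ofReal (Real.exp (k ⬝ᵥ A T ω)) ∂(P T) := by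
      conv_lhs => rw [← hwd]
      rw [lintegral_withDensity_eq_lintegral_mul _
        (Measure.measurable_rnDeriv _ _) (mdot k)]
      simp [Pi.mul_apply]
    -- step C : a.e. rewriting using the decomposition
    have stepC : (∫⁻ ω, (((P T).map (Rinv T)).rnDeriv (P T) ω) *
          ENNReal.ofReal (Real.exp (k ⬝ᵥ A T ω)) ∂(P T)) =
        ∫⁻ ω, ENNReal.ofReal (Real.exp ((k - w) ⬝ᵥ A T ω - B T ω)) ∂(P T) := by
      refine lintegral_congr_ae ?_
      filter_upwards [hSg T hT, hdec T hT] with ω h1 h2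
      rw [h1, ← ENNReal.ofReal_mul (Real.exp_pos _).le, ← Real.exp_add]
      congr 2
      rw [h2, sub_dotProduct]; ring
    have hZ : (∫⁻ ω, ENNReal.ofReal (Real.exp (k' ⬝ᵥ A T ω)) ∂(P T)) =
        ∫⁻ ω, ENNReal.ofReal (Real.exp ((k - w) ⬝ᵥ A T ω - B T ω)) ∂(P T) :=
      stepA.symm.trans (stepB.trans stepC)
    -- bounds
    have hub : (∫⁻ ω, ENNReal.ofReal (Real.exp (k' ⬝ᵥ A T ω)) ∂(P T)) ≤
        ENNReal.ofReal (Real.exp ε) *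
          ∫⁻ ω, ENNReal.ofReal (Real.exp ((k - w) ⬝ᵥ A T ω)) ∂(P T) := by
      rw [hZ, ← lintegral_const_mul _ (mdot (k - w))]
      refine lintegral_mono fun ω => ?_
      rw [← ENNReal.ofReal_mul (Real.exp_pos _).le, ← Real.exp_add]
      refine ENNReal.ofReal_le_ofReal (Real.exp_le_exp.2 ?_)
      have := (abs_le.1 (hε ω)).1
      linarith
    have hlb : ENNReal.ofReal (Real.exp (-ε)) *
        (∫⁻ ω, ENNReal.ofReal (Real.exp ((k - w) ⬝ᵥ A T ω)) ∂(P T)) ≤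
        ∫⁻ ω, ENNReal.ofReal (Real.exp (k' ⬝ᵥ A T ω)) ∂(P T) := by
      rw [hZ, ← lintegral_const_mul _ (mdot (k - w))]
      refine lintegral_mono fun ω => ?_
      rw [← ENNReal.ofReal_mul (Real.exp_pos _).le, ← Real.exp_add]
      refine ENNReal.ofReal_le_ofReal (Real.exp_le_exp.2 ?_)
      have := (abs_le.1 (hε ω)).2
      linarith
    by_cases htop : (∫⁻ ω, ENNReal.ofReal (Real.exp ((k - w) ⬝ᵥ A T ω)) ∂(P T)) = ⊤
    · have h1 : (∫⁻ ω, ENNReal.ofReal (Real.exp (k' ⬝ᵥ A T ω)) ∂(P T)) = ⊤ := by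
        refine top_le_iff.1 ?_
        calc (⊤ : ENNReal) = ENNReal.ofReal (Real.exp (-ε)) * ⊤ := by
              rw [ENNReal.mul_top (by simp [Real.exp_pos])]
          _ = ENNReal.ofReal (Real.exp (-ε)) *
              ∫⁻ ω, ENNReal.ofReal (Real.exp ((k - w) ⬝ᵥ A T ω)) ∂(P T) := by rw [htop]
          _ ≤ _ := hlb
      rw [htop, h1]
      simpa using hε0
    · have hfin' : (∫⁻ ω, ENNReal.ofReal (Real.exp (k' ⬝ᵥ A T ω)) ∂(P T)) ≠ ⊤ :=
        ne_top_of_le_ne_top (ENNReal.mul_ne_top ENNReal.ofReal_ne_top htop) hub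
      have hb : 0 < (∫⁻ ω, ENNReal.ofReal (Real.exp ((k - w) ⬝ᵥ A T ω)) ∂(P T)).toReal :=
        ENNReal.toReal_pos (hZne (k - w)) htop
      have ha : 0 < (∫⁻ ω, ENNReal.ofReal (Real.exp (k' ⬝ᵥ A T ω)) ∂(P T)).toReal :=
        ENNReal.toReal_pos (hZne k') hfin'
      set a := (∫⁻ ω, ENNReal.ofReal (Real.exp (k' ⬝ᵥ A T ω)) ∂(P T)).toReal
      set b := (∫⁻ ω, ENNReal.ofReal (Real.exp ((k - w) ⬝ᵥ A T ω)) ∂(P T)).toReal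
      have hab1 : a ≤ Real.exp ε * b := by
        have h2 := ENNReal.toReal_mono (ENNReal.mul_ne_top ENNReal.ofReal_ne_top htop) hub
        rwa [ENNReal.toReal_mul, ENNReal.toReal_ofReal (Real.exp_pos _).le] at h2
      have hab2 : Real.exp (-ε) * b ≤ a := by
        have h2 := ENNReal.toReal_mono hfin' hlb
        rwa [ENNReal.toReal_mul, ENNReal.toReal_ofReal (Real.exp_pos _).le] at h2
      have hu : Real.log a ≤ ε + Real.log b := by
        have := Real.log_le_log ha hab1
        rwa [Real.log_mul (Real.exp_ne_zero _) hb.ne', Real.log_exp] at this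
      have hl : Real.log b - ε ≤ Real.log a := by
        have h3 : 0 < Real.exp (-ε) * b := by positivity
        have := Real.log_le_log h3 hab2
        rw [Real.log_mul (Real.exp_ne_zero _) hb.ne', Real.log_exp] at this
        linarith
      exact abs_le.2 ⟨by linarith, by linarith⟩
  -- conclusion
  have hdiff : Tendsto (fun T : ℝ =>
      Real.log ((∫⁻ ω, ENNReal.ofReal (Real.exp (k' ⬝ᵥ A T ω)) ∂(P T)).toReal) / T -
      Real.log ((∫⁻ ω, ENNReal.ofReal (Real.exp ((k - w) ⬝ᵥ A T ω)) ∂(P T)).toReal) / T)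
      atTop (nhds 0) := by
    refine squeeze_zero_norm' ?_ hBlim
    filter_upwards [eventually_ge_atTop (1 : ℝ)] with T hT
    have hT0 : (0 : ℝ) < T := lt_of_lt_of_le one_pos hT
    rw [Real.norm_eq_abs, ← sub_div, abs_div, abs_of_pos hT0]
    exact div_le_div_of_nonneg_right (key T hT) hT0.le
  have h1 := (hΛ k').sub (hΛ (k - w))
  have h2 : Λ k' - Λ (k - w) = 0 := tendsto_nhds_unique h1 hdiff
  linarith
end

section
/- (Finite-time Fluctuation Relation for canonical processes, Radon–Nikodym form) The law of A under the canonical measure P^{cano,s} has density a ↦ exp⟨(𝓡ᵀ − I)s, 𝓡⁻¹a⟩ with respect to the law of 𝓡A under P^{cano,s}; that is, P^{cano,s}∘A⁻¹ equals the measure (P^{cano,s}∘(𝓡∘A)⁻¹) with density a ↦ exp⟨(𝓡ᵀ − I)s, 𝓡⁻¹a⟩, where I is the n×n identity matrix. -/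
open MeasureTheory Matrix

/-- **Finite-time Fluctuation Relation for canonical processes, Radon–Nikodym form.**
`P⁰` is a probability measure which is `R`-symmetric (its pushforward under the
measurable inverse `Rinv` of the measurable bijection `R` is `P⁰` itself), `A` is a
measurable observable with the covariance `A (R ω) = 𝓡 *ᵥ A ω` (`𝓡` invertible), and
`s` is a biasing vector with normalization `Zs = ∫ exp ⟪s, A⟫ dP⁰ ∈ (0,∞)`.  The
canonical measure is `Pcano = (exp ⟪s, A⟫ / Zs) · P⁰`.  Then the law of `A` under
`Pcano` equals the law of `𝓡 *ᵥ A` under `Pcano` with density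
`a ↦ exp ⟪(𝓡ᵀ - 1) s, 𝓡⁻¹ *ᵥ a⟫`. -/
theorem canonical_finite_time_FR_radon_nikodym
    {Ω : Type*} [MeasurableSpace Ω]
    (P0 : Measure Ω) [IsProbabilityMeasure P0]
    (R Rinv : Ω → Ω) (hR : Measurable R) (hRinv : Measurable Rinv)
    (hli : Function.LeftInverse Rinv R) (hri : Function.RightInverse Rinv R)
    (hsym : P0.map Rinv = P0)
    {n : ℕ} (hn : 1 ≤ n)
    (A : Ω → (Fin n → ℝ)) (hA : Measurable A)
    (𝓡 : Matrix (Fin n) (Fin n) ℝ) (h𝓡 : IsUnit 𝓡.det)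
    (hcov : ∀ ω, A (R ω) = 𝓡 *ᵥ A ω)
    (s : Fin n → ℝ)
    (Zs : ENNReal) (hZs : Zs = ∫⁻ ω, ENNReal.ofReal (Real.exp (s ⬝ᵥ A ω)) ∂P0)
    (hZs0 : 0 < Zs) (hZstop : Zs < ⊤)
    (Pcano : Measure Ω)
    (hPcano : Pcano = P0.withDensity (fun ω => ENNReal.ofReal (Real.exp (s ⬝ᵥ A ω)) / Zs)) :
    Pcano.map A
      = (Pcano.map (fun ω => 𝓡 *ᵥ A ω)).withDensity
          (fun a => ENNReal.ofReal (Real.exp ((𝓡ᵀ *ᵥ s - s) ⬝ᵥ (𝓡⁻¹ *ᵥ a)))) := by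
  have hdot : ∀ (c : Fin n → ℝ), Measurable (fun v : Fin n → ℝ => c ⬝ᵥ v) := fun c => by
    simp only [dotProduct]
    exact Finset.measurable_sum _ fun i _ => (measurable_pi_apply i).const_mul _
  have hmulVec : ∀ (M : Matrix (Fin n) (Fin n) ℝ),
      Measurable (fun v : Fin n → ℝ => M *ᵥ v) := fun M =>
    measurable_pi_lambda _ fun i => hdot (M i)
  have hA𝓡 : Measurable (fun ω => 𝓡 *ᵥ A ω) := (hmulVec 𝓡).comp hA
  have hg : Measurable (fun ω => ENNReal.ofReal (Real.exp (s ⬝ᵥ A ω)) / Zs) :=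
    ((Real.measurable_exp.comp ((hdot s).comp hA)).ennreal_ofReal).div measurable_const
  have hf : Measurable (fun a : Fin n → ℝ =>
      ENNReal.ofReal (Real.exp ((𝓡ᵀ *ᵥ s - s) ⬝ᵥ (𝓡⁻¹ *ᵥ a)))) :=
    (Real.measurable_exp.comp ((hdot _).comp (hmulVec 𝓡⁻¹))).ennreal_ofReal
  have hRmap : P0.map R = P0 := by
    conv_lhs => rw [← hsym, Measure.map_map hR hRinv]
    have : R ∘ Rinv = id := funext hri
    rw [this, Measure.map_id]
  have hRR : 𝓡⁻¹ * 𝓡 = 1 := Matrix.nonsing_inv_mul 𝓡 h𝓡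
  ext B hB
  rw [hPcano, Measure.map_apply hA hB, withDensity_apply _ (hA hB),
    withDensity_apply _ hB, setLIntegral_map hB hf hA𝓡,
    ← lintegral_indicator (hA hB) _, ← lintegral_indicator (hA𝓡 hB) _]
  have hfc : Measurable fun ω => ENNReal.ofReal
      (Real.exp ((𝓡ᵀ *ᵥ s - s) ⬝ᵥ 𝓡⁻¹ *ᵥ 𝓡 *ᵥ A ω)) := hf.comp hA𝓡
  rw [lintegral_withDensity_eq_lintegral_mul _ hg (hfc.indicator (hA𝓡 hB))]
  -- simplify the integrand on the RHS
  have key : ∀ ω, ((fun ω => ENNReal.ofReal (Real.exp (s ⬝ᵥ A ω)) / Zs) *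
      ((fun ω => 𝓡 *ᵥ A ω) ⁻¹' B).indicator
        (fun ω => ENNReal.ofReal (Real.exp ((𝓡ᵀ *ᵥ s - s) ⬝ᵥ (𝓡⁻¹ *ᵥ (𝓡 *ᵥ A ω)))))) ω
      = (R ⁻¹' (A ⁻¹' B)).indicator
          (fun ω => ENNReal.ofReal (Real.exp (s ⬝ᵥ A (R ω))) / Zs) ω := by
    intro ω
    have hinv : 𝓡⁻¹ *ᵥ (𝓡 *ᵥ A ω) = A ω := by
      rw [Matrix.mulVec_mulVec, hRR, Matrix.one_mulVec]
    have hpre : ((fun ω => 𝓡 *ᵥ A ω) ⁻¹' B : Set Ω) = R ⁻¹' (A ⁻¹' B) := by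
      ext x; simp [hcov x]
    by_cases hmem : ω ∈ R ⁻¹' (A ⁻¹' B)
    · simp only [Pi.mul_apply, hpre, Set.indicator_of_mem hmem, hinv, hcov ω]
      have harg : s ⬝ᵥ A ω + (𝓡ᵀ *ᵥ s - s) ⬝ᵥ A ω = s ⬝ᵥ (𝓡 *ᵥ A ω) := by
        rw [sub_dotProduct, Matrix.mulVec_transpose, ← Matrix.dotProduct_mulVec]
        ring
      rw [div_eq_mul_inv, div_eq_mul_inv, mul_right_comm,
        ← ENNReal.ofReal_mul (Real.exp_nonneg _), ← Real.exp_add, harg]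
    · simp [Pi.mul_apply, hpre, Set.indicator_of_notMem hmem]
  simp only [key]
  have h2 : ∀ ω, (R ⁻¹' (A ⁻¹' B)).indicator
      (fun ω => ENNReal.ofReal (Real.exp (s ⬝ᵥ A (R ω))) / Zs) ω
      = (A ⁻¹' B).indicator
          (fun x => ENNReal.ofReal (Real.exp (s ⬝ᵥ A x)) / Zs) (R ω) := by
    intro ω
    by_cases h : R ω ∈ A ⁻¹' B
    · rw [Set.indicator_of_mem h, Set.indicator_of_mem (by exact h)]
    · rw [Set.indicator_of_notMem h, Set.indicator_of_notMem (by exact h)]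
  simp only [h2]
  rw [← lintegral_map (hg.indicator (hA hB)) hR, hRmap]
end

section
/- (Finite-time Fluctuation Relation for canonical processes, moment generating function form) For every k ∈ ℝⁿ one has the equality in [0,∞]: ∫ exp⟨k, A⟩ dP^{cano,s} = ∫ exp⟨𝓡ᵀ(k + s) − s, A⟩ dP^{cano,s}. -/
open MeasureTheory Matrix

/-- **Finite-time Fluctuation Relation for canonical processes, MGF form.**
With the `R`-symmetric a-priori measure `P⁰`, the covariant observable `A`
(`A (R ω) = 𝓡 *ᵥ A ω`, `𝓡` invertible), the biasing vector `s` with normalization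
`Zs = ∫ exp ⟪s, A⟫ dP⁰ ∈ (0,∞)` and the canonical measure
`Pcano = (exp ⟪s, A⟫ / Zs) · P⁰`, for every `k ∈ ℝⁿ` one has, in `[0,∞]`,
`∫ exp ⟪k, A⟫ dPcano = ∫ exp ⟪𝓡ᵀ (k + s) - s, A⟫ dPcano`. -/
theorem canonical_finite_time_FR_mgf
    {Ω : Type*} [MeasurableSpace Ω]
    (P0 : Measure Ω) [IsProbabilityMeasure P0]
    (R Rinv : Ω → Ω) (hR : Measurable R) (hRinv : Measurable Rinv)
    (hli : Function.LeftInverse Rinv R) (hri : Function.RightInverse Rinv R)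
    (hsym : P0.map Rinv = P0)
    {n : ℕ} (hn : 1 ≤ n)
    (A : Ω → (Fin n → ℝ)) (hA : Measurable A)
    (𝓡 : Matrix (Fin n) (Fin n) ℝ) (h𝓡 : IsUnit 𝓡.det)
    (hcov : ∀ ω, A (R ω) = 𝓡 *ᵥ A ω)
    (s : Fin n → ℝ)
    (Zs : ENNReal) (hZs : Zs = ∫⁻ ω, ENNReal.ofReal (Real.exp (s ⬝ᵥ A ω)) ∂P0)
    (hZs0 : 0 < Zs) (hZstop : Zs < ⊤)
    (Pcano : Measure Ω)
    (hPcano : Pcano = P0.withDensity (fun ω => ENNReal.ofReal (Real.exp (s ⬝ᵥ A ω)) / Zs)) :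
    ∀ k : Fin n → ℝ,
      ∫⁻ ω, ENNReal.ofReal (Real.exp (k ⬝ᵥ A ω)) ∂Pcano
        = ∫⁻ ω, ENNReal.ofReal (Real.exp ((𝓡ᵀ *ᵥ (k + s) - s) ⬝ᵥ A ω)) ∂Pcano := by
  intro k
  have hmeas : ∀ v : Fin n → ℝ,
      Measurable fun ω => ENNReal.ofReal (Real.exp (v ⬝ᵥ A ω)) := by
    intro v
    refine ENNReal.measurable_ofReal.comp (Real.measurable_exp.comp ?_)
    simp only [dotProduct]
    exact Finset.measurable_sum _ fun i _ =>
      measurable_const.mul ((measurable_pi_apply i).comp hA)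
  have hmapR : P0.map R = P0 := by
    have hcomp : R ∘ Rinv = id := funext hri
    conv_lhs => rw [← hsym]
    rw [Measure.map_map hR hRinv, hcomp, Measure.map_id]
  have key : ∀ v : Fin n → ℝ,
      ∫⁻ ω, ENNReal.ofReal (Real.exp (v ⬝ᵥ A ω)) ∂Pcano
        = (∫⁻ ω, ENNReal.ofReal (Real.exp ((v + s) ⬝ᵥ A ω)) ∂P0) * Zs⁻¹ := by
    intro v
    rw [hPcano, lintegral_withDensity_eq_lintegral_mul _ ((hmeas s).div_const Zs) (hmeas v)]
    have heq : ∀ ω,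
        ((fun ω => ENNReal.ofReal (Real.exp (s ⬝ᵥ A ω)) / Zs) *
          fun ω => ENNReal.ofReal (Real.exp (v ⬝ᵥ A ω))) ω
          = ENNReal.ofReal (Real.exp ((v + s) ⬝ᵥ A ω)) * Zs⁻¹ := by
      intro ω
      simp only [Pi.mul_apply, div_eq_mul_inv, add_dotProduct, Real.exp_add,
        ENNReal.ofReal_mul (Real.exp_nonneg _)]
      ring
    rw [lintegral_congr heq, lintegral_mul_const _ (hmeas _)]
  rw [key k, key (𝓡ᵀ *ᵥ (k + s) - s), sub_add_cancel]
  congr 1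
  conv_lhs => rw [← hmapR]
  rw [lintegral_map (hmeas _) hR]
  refine lintegral_congr fun ω => ?_
  rw [hcov, dotProduct_mulVec, mulVec_transpose]
end

section
/- (Asymptotic Fluctuation Relations for canonical processes) Let Λ₀ : ℝⁿ → ℝ satisfy the symmetry Λ₀(𝓡ᵀk) = Λ₀(k) for all k ∈ ℝⁿ, where 𝓡 is an invertible n×n real matrix with transpose 𝓡ᵀ. Fix s ∈ ℝⁿ and define Λ_s(k) := Λ₀(k+s) − Λ₀(s) and I_s(a) := sup_{k∈ℝⁿ}(⟨k,a⟩ − Λ_s(k)). Then for every k ∈ ℝⁿ: Λ_s(k) = Λ_s(𝓡ᵀ(k+s) − s), and for every a ∈ ℝⁿ (as an equality in ℝ ∪ {+∞}): I_s(𝓡a) = ⟨s, a − 𝓡a⟩ + I_s(a). -/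
/-!
The affine map `e k = 𝓡ᵀ (k + s) - s` is a bijection of `ℝⁿ` that preserves `Λs` (this is the
symmetry of `Λ₀` shifted by `s`), and it transforms the linear term: `⟪k, 𝓡 a⟫ = ⟪e k, a⟫ + ⟪s, a - 𝓡 a⟫`.
Reindexing the supremum defining `Is (𝓡 a)` by `e` therefore pulls out the constant `⟪s, a - 𝓡 a⟫`.
-/

open Matrix

lemma EReal.coe_add_iSup {ι : Sort*} (c : ℝ) (f : ι → EReal) :
    (c : EReal) + ⨆ i, f i = ⨆ i, ((c : EReal) + f i) :=
  Monotone.map_iSup_of_continuousAt (f := fun x => (c : EReal) + x)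
    ((EReal.continuousAt_add (p := ((c : EReal), ⨆ i, f i)) (Or.inl (EReal.coe_ne_top c))
      (Or.inl (EReal.coe_ne_bot c))).comp (continuousAt_const.prodMk continuousAt_id))
    (fun _ _ h => add_le_add_right h _) (EReal.add_bot c)

namespace Matrix

variable {ι R : Type*} [Fintype ι]

lemma dotProduct_mulVec_eq_transpose_mulVec_add_sub [CommRing R] (A : Matrix ι ι R)
    (k s a : ι → R) :
    k ⬝ᵥ (A *ᵥ a) = (Aᵀ *ᵥ (k + s) - s) ⬝ᵥ a + s ⬝ᵥ (a - A *ᵥ a) := by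
  rw [sub_dotProduct, mulVec_transpose, ← dotProduct_mulVec, add_dotProduct, dotProduct_sub]
  ring

lemma surjective_mulVec_add_sub [DecidableEq ι] [CommRing R] {A : Matrix ι ι R}
    (hA : IsUnit A.det) (s : ι → R) : Function.Surjective fun k => A *ᵥ (k + s) - s := by
  intro y
  obtain ⟨v, hv⟩ := mulVec_surjective_iff_isUnit.mpr ((isUnit_iff_isUnit_det A).mpr hA) (y + s)
  exact ⟨v - s, by simp [hv]⟩

end Matrix

theorem canonical_asymptotic_FR_general
    {n : ℕ}
    (𝓡 : Matrix (Fin n) (Fin n) ℝ) (h𝓡 : IsUnit 𝓡.det)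
    (Λ₀ : (Fin n → ℝ) → ℝ) (hsym : ∀ k, Λ₀ (𝓡ᵀ *ᵥ k) = Λ₀ k)
    (s : Fin n → ℝ)
    (Λs : (Fin n → ℝ) → ℝ) (hΛs : ∀ k, Λs k = Λ₀ (k + s) - Λ₀ s)
    (Is : (Fin n → ℝ) → EReal)
    (hIs : ∀ a, Is a = ⨆ k : Fin n → ℝ, ((k ⬝ᵥ a - Λs k : ℝ) : EReal)) :
    (∀ k : Fin n → ℝ, Λs k = Λs (𝓡ᵀ *ᵥ (k + s) - s)) ∧
    (∀ a : Fin n → ℝ, Is (𝓡 *ᵥ a) = ((s ⬝ᵥ (a - 𝓡 *ᵥ a) : ℝ) : EReal) + Is a) := by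
  have hΛs_inv : ∀ k, Λs k = Λs (𝓡ᵀ *ᵥ (k + s) - s) := fun k => by
    rw [hΛs, hΛs, sub_add_cancel, hsym]
  refine ⟨hΛs_inv, fun a => ?_⟩
  have he : Function.Surjective fun k => 𝓡ᵀ *ᵥ (k + s) - s :=
    surjective_mulVec_add_sub (by rwa [det_transpose]) s
  calc Is (𝓡 *ᵥ a)
      = ⨆ k, (((s ⬝ᵥ (a - 𝓡 *ᵥ a) + ((𝓡ᵀ *ᵥ (k + s) - s) ⬝ᵥ a - Λs (𝓡ᵀ *ᵥ (k + s) - s)) : ℝ)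
          : EReal)) := by
        rw [hIs]
        congr! 2 with k
        rw [dotProduct_mulVec_eq_transpose_mulVec_add_sub 𝓡 k s a, ← hΛs_inv]
        congr 1
        ring
    _ = ⨆ k, (((s ⬝ᵥ (a - 𝓡 *ᵥ a) + (k ⬝ᵥ a - Λs k)) : ℝ) : EReal) :=
        he.iSup_comp fun k => (((s ⬝ᵥ (a - 𝓡 *ᵥ a) + (k ⬝ᵥ a - Λs k)) : ℝ) : EReal)
    _ = ((s ⬝ᵥ (a - 𝓡 *ᵥ a) : ℝ) : EReal) + Is a := by
        simp only [EReal.coe_add, hIs, EReal.coe_add_iSup]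

/-- **Asymptotic Fluctuation Relations for canonical processes.**
Let `Λ₀ : ℝⁿ → ℝ` satisfy `Λ₀ (𝓡ᵀ *ᵥ k) = Λ₀ k` for all `k`, with `𝓡` invertible.
Fix `s`, define `Λs k = Λ₀ (k + s) - Λ₀ s` and the Legendre–Fenchel transform
`Is a = ⨆ k, (⟪k,a⟫ - Λs k)` in `EReal`.  Then `Λs k = Λs (𝓡ᵀ *ᵥ (k + s) - s)` for all
`k`, and `Is (𝓡 *ᵥ a) = ⟪s, a - 𝓡 *ᵥ a⟫ + Is a` for all `a` (in `ℝ ∪ {+∞}`). -/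
theorem canonical_asymptotic_FR
    {n : ℕ} (hn : 1 ≤ n)
    (𝓡 : Matrix (Fin n) (Fin n) ℝ) (h𝓡 : IsUnit 𝓡.det)
    (Λ₀ : (Fin n → ℝ) → ℝ) (hsym : ∀ k, Λ₀ (𝓡ᵀ *ᵥ k) = Λ₀ k)
    (s : Fin n → ℝ)
    (Λs : (Fin n → ℝ) → ℝ) (hΛs : ∀ k, Λs k = Λ₀ (k + s) - Λ₀ s)
    (Is : (Fin n → ℝ) → EReal)
    (hIs : ∀ a, Is a = ⨆ k : Fin n → ℝ, ((k ⬝ᵥ a - Λs k : ℝ) : EReal)) :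
    (∀ k : Fin n → ℝ, Λs k = Λs (𝓡ᵀ *ᵥ (k + s) - s)) ∧
    (∀ a : Fin n → ℝ, Is (𝓡 *ᵥ a) = ((s ⬝ᵥ (a - 𝓡 *ᵥ a) : ℝ) : EReal) + Is a) :=
  canonical_asymptotic_FR_general 𝓡 h𝓡 Λ₀ hsym s Λs hΛs Is hIs
end

section
/- (Scalar asymptotic fluctuation relation, Laplace version) Let I : ℝⁿ → ℝ ∪ {+∞}, let 𝓡 be an invertible n×n real matrix, w ∈ ℝⁿ and α ∈ ℝ with 𝓡ᵀw = αw, and suppose I(𝓡a) = ⟨w, a⟩ + I(a) for all a ∈ ℝⁿ. Define Λ^Σ(k) := sup_{a∈ℝⁿ}( k⟨w, a⟩ − I(a) ) for k ∈ ℝ, with values in the extended reals. Then Λ^Σ(k) = Λ^Σ(kα − 1) for every k ∈ ℝ. -/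
open Matrix

lemma EReal.sub_add_cancel' (x y : ℝ) (z : EReal) :
    ((x : EReal)) - ((y : EReal) + z) = ((x - y : ℝ) : EReal) - z := by
  induction z using EReal.rec with
  | bot => simp [sub_eq_add_neg]
  | coe z =>
      norm_cast
      ring
  | top => simp [sub_eq_add_neg]

/-- **Scalar asymptotic fluctuation relation, Laplace version.**
Let `I : ℝⁿ → ℝ ∪ {+∞}` (as `EReal`-valued), `𝓡` invertible with `𝓡ᵀ *ᵥ w = α • w`,
and suppose `I (𝓡 *ᵥ a) = ⟪w, a⟫ + I a` for all `a`.  Define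
`ΛSig k = ⨆ a, (k ⟪w,a⟫ - I a)` in the extended reals.  Then
`ΛSig k = ΛSig (k * α - 1)` for every `k : ℝ`. -/
theorem scalar_asymptotic_FR_laplace
    {n : ℕ} (hn : 1 ≤ n)
    (I : (Fin n → ℝ) → EReal)
    (𝓡 : Matrix (Fin n) (Fin n) ℝ) (h𝓡 : IsUnit 𝓡.det)
    (w : Fin n → ℝ) (α : ℝ) (hw : 𝓡ᵀ *ᵥ w = α • w)
    (hI : ∀ a : Fin n → ℝ, I (𝓡 *ᵥ a) = ((w ⬝ᵥ a : ℝ) : EReal) + I a)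
    (ΛSig : ℝ → EReal)
    (hΛSig : ∀ k : ℝ, ΛSig k = ⨆ a : Fin n → ℝ, (((k * (w ⬝ᵥ a) : ℝ) : EReal) - I a)) :
    ∀ k : ℝ, ΛSig k = ΛSig (k * α - 1) := by
  intro k
  haveI := 𝓡.invertibleOfIsUnitDet h𝓡
  let e : (Fin n → ℝ) ≃ (Fin n → ℝ) :=
    { toFun := fun a => 𝓡 *ᵥ a
      invFun := fun a => 𝓡⁻¹ *ᵥ a
      left_inv := fun a => by simp [Matrix.mulVec_mulVec, Matrix.nonsing_inv_mul _ h𝓡]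
      right_inv := fun a => by simp [Matrix.mulVec_mulVec, Matrix.mul_nonsing_inv _ h𝓡] }
  rw [hΛSig k, hΛSig (k * α - 1)]
  rw [← Equiv.iSup_comp (g := fun a => ((k * (w ⬝ᵥ a) : ℝ) : EReal) - I a) e]
  congr 1
  funext a
  have hdot : w ⬝ᵥ (𝓡 *ᵥ a) = α * (w ⬝ᵥ a) := by
    rw [Matrix.dotProduct_mulVec, ← Matrix.mulVec_transpose, hw]
    simp [smul_dotProduct]
  show ((k * (w ⬝ᵥ (𝓡 *ᵥ a)) : ℝ) : EReal) - I (𝓡 *ᵥ a) = _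
  rw [hdot, hI a, EReal.sub_add_cancel']
  ring_nf
end

section
/- (Scalar asymptotic fluctuation relation, rate function version) Let I : ℝⁿ → ℝ ∪ {+∞}, let 𝓡 be an invertible n×n real matrix, w ∈ ℝⁿ and α ∈ ℝ with α ≠ 0 and 𝓡ᵀw = αw, and suppose I(𝓡a) = ⟨w, a⟩ + I(a) for all a ∈ ℝⁿ. Define I^Σ(σ) := inf{ I(a) : a ∈ ℝⁿ, ⟨w, a⟩ = σ } for σ ∈ ℝ (infimum over the empty set equal to +∞). Then I^Σ(σ) = σ/α + I^Σ(σ/α) for every σ ∈ ℝ. -/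
open Matrix

/-! Since `𝓡ᵀ w = α w`, we have `⟨w, 𝓡 a⟩ = α ⟨w, a⟩`, so the invertible map `𝓡` carries the
level set `{⟨w, a⟩ = σ / α}` onto `{⟨w, a⟩ = σ}`. On the former, `I ∘ 𝓡 = σ / α + I`, and adding
a real constant commutes with infima in `EReal` (also the empty one, as `c + ⊤ = ⊤`). -/

theorem EReal.coe_add_iInf {ι : Sort*} (c : ℝ) (f : ι → EReal) :
    (c : EReal) + ⨅ i, f i = ⨅ i, ((c : EReal) + f i) :=
  Monotone.map_iInf_of_continuousAt (f := ((c : EReal) + ·))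
    ((EReal.continuousAt_add (Or.inl (EReal.coe_ne_top c)) (Or.inl (EReal.coe_ne_bot c))).comp
      (continuousAt_const.prodMk continuousAt_id))
    (fun _ _ h => add_le_add_right h _) (EReal.coe_add_top c)

theorem Matrix.dotProduct_mulVec_eq_mul_of_transpose_mulVec_eq_smul {R ι : Type*}
    [CommSemiring R] [Fintype ι] {A : Matrix ι ι R} {w : ι → R} {α : R}
    (hw : Aᵀ *ᵥ w = α • w) (a : ι → R) : w ⬝ᵥ (A *ᵥ a) = α * (w ⬝ᵥ a) := by
  rw [dotProduct_mulVec, ← mulVec_transpose, hw, smul_dotProduct, smul_eq_mul]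

theorem iInf_fiber_eq_iInf_fiber_div_comp {X 𝕜 β : Type*} [Field 𝕜] [CompleteLattice β]
    {f : X → X} (hf : Function.Surjective f) {φ : X → 𝕜} {α : 𝕜} (hα : α ≠ 0)
    (hφ : ∀ a, φ (f a) = α * φ a) (g : X → β) (σ : 𝕜) :
    ⨅ b : {b // φ b = σ}, g b = ⨅ a : {a // φ a = σ / α}, g (f a) := by
  refine le_antisymm (le_iInf fun ⟨a, ha⟩ => ?_) (le_iInf fun ⟨b, hb⟩ => ?_)
  · exact iInf_le_of_le ⟨f a, by rw [hφ, ha, mul_div_cancel₀ _ hα]⟩ le_rfl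
  · obtain ⟨a, rfl⟩ := hf b
    exact iInf_le_of_le ⟨a, by rw [eq_div_iff hα, mul_comm, ← hφ, hb]⟩ le_rfl

theorem scalar_asymptotic_FR_rate_function_general
    {n : ℕ}
    (I : (Fin n → ℝ) → EReal)
    (𝓡 : Matrix (Fin n) (Fin n) ℝ) (h𝓡 : IsUnit 𝓡.det)
    (w : Fin n → ℝ) (α : ℝ) (hα : α ≠ 0) (hw : 𝓡ᵀ *ᵥ w = α • w)
    (hI : ∀ a : Fin n → ℝ, I (𝓡 *ᵥ a) = ((w ⬝ᵥ a : ℝ) : EReal) + I a)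
    (ISig : ℝ → EReal)
    (hISig : ∀ σ : ℝ, ISig σ = ⨅ a : {a : Fin n → ℝ // w ⬝ᵥ a = σ}, I a.val) :
    ∀ σ : ℝ, ISig σ = ((σ / α : ℝ) : EReal) + ISig (σ / α) := by
  intro σ
  have h𝓡_surj : Function.Surjective (𝓡 *ᵥ ·) :=
    mulVec_surjective_iff_isUnit.2 ((isUnit_iff_isUnit_det 𝓡).2 h𝓡)
  calc ISig σ = ⨅ a : {a // w ⬝ᵥ a = σ / α}, I (𝓡 *ᵥ a) := by
        rw [hISig, iInf_fiber_eq_iInf_fiber_div_comp h𝓡_surj hα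
          (dotProduct_mulVec_eq_mul_of_transpose_mulVec_eq_smul hw)]
    _ = ⨅ a : {a // w ⬝ᵥ a = σ / α}, (((σ / α : ℝ) : EReal) + I a) :=
        iInf_congr fun a => by rw [hI, a.2]
    _ = ((σ / α : ℝ) : EReal) + ISig (σ / α) := by rw [hISig, EReal.coe_add_iInf]

/-- **Scalar asymptotic fluctuation relation, rate function version.**
Let `I : ℝⁿ → ℝ ∪ {+∞}` (as `EReal`-valued), `𝓡` invertible, `α ≠ 0` with
`𝓡ᵀ *ᵥ w = α • w`, and suppose `I (𝓡 *ᵥ a) = ⟪w, a⟫ + I a` for all `a`.  Define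
`ISig σ = ⨅ {a : ⟪w,a⟫ = σ} I a` (infimum over the empty set being `+∞ = ⊤`).  Then
`ISig σ = σ/α + ISig (σ/α)` for every `σ : ℝ`. -/
theorem scalar_asymptotic_FR_rate_function
    {n : ℕ} (hn : 1 ≤ n)
    (I : (Fin n → ℝ) → EReal)
    (𝓡 : Matrix (Fin n) (Fin n) ℝ) (h𝓡 : IsUnit 𝓡.det)
    (w : Fin n → ℝ) (α : ℝ) (hα : α ≠ 0) (hw : 𝓡ᵀ *ᵥ w = α • w)
    (hI : ∀ a : Fin n → ℝ, I (𝓡 *ᵥ a) = ((w ⬝ᵥ a : ℝ) : EReal) + I a)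
    (ISig : ℝ → EReal)
    (hISig : ∀ σ : ℝ, ISig σ = ⨅ a : {a : Fin n → ℝ // w ⬝ᵥ a = σ}, I a.val) :
    ∀ σ : ℝ, ISig σ = ((σ / α : ℝ) : EReal) + ISig (σ / α) :=
  scalar_asymptotic_FR_rate_function_general I 𝓡 h𝓡 w α hα hw hI ISig hISig
end

section
/- (First-order cumulant hierarchy) Let Λ : ℝⁿ → ℝ be twice continuously differentiable, let 𝓡 : ℝ → n×n real matrices and w : ℝ → ℝⁿ be differentiable at θ = 0 with 𝓡(0) = I (identity matrix) and w(0) = 0, and suppose Λ(k) = Λ(𝓡(θ)ᵀk − w(θ)) for all θ ∈ ℝ and all k ∈ ℝⁿ. Set 𝓝 := (d/dθ)𝓡(θ)|_{θ=0} and w' := (d/dθ)w(θ)|_{θ=0}. Then for every index i ∈ {1,…,n}: ∑_{j=1}^{n} 𝓝_{ij} ∂_jΛ(0) = ∑_{j=1}^{n} w'_j ∂_i∂_jΛ(0), i.e. the first cumulants ∂_jΛ(0) and the second cumulants ∂_i∂_jΛ(0) satisfy the relation 𝓝·∇Λ(0) = HessΛ(0)·w'. -/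
/-!
Differentiating the invariance `Λ k = Λ ((𝓡 θ)ᵀ *ᵥ k - w θ)` in `θ` at `θ = 0` gives the
infinitesimal invariance `DΛ(k) (Nᵀ *ᵥ k - w') = 0` for every `k`. Differentiating this
identity once more in `k`, at `k = 0`, gives `DΛ(0) (Nᵀ *ᵥ u) = D²Λ(0) u w'`; for `u = eᵢ`,
expanding both sides in the standard basis is the claim.
-/

open Matrix

section

variable {E F : Type*} [NormedAddCommGroup E] [NormedSpace ℝ E]
  [NormedAddCommGroup F] [NormedSpace ℝ F]

theorem HasFDerivAt.apply_eq_zero_of_comp_eq_const {f : E → F} {f' : E →L[ℝ] F}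
    {γ : ℝ → E} {x v : E} (hf : HasFDerivAt f f' x) (hγ0 : γ 0 = x) (hγ : HasDerivAt γ v 0)
    (hconst : ∀ θ, f (γ θ) = f x) : f' v = 0 := by
  subst hγ0
  have hconst' : HasDerivAt (f ∘ γ) 0 0 := by
    rw [show f ∘ γ = fun _ => f (γ 0) from funext hconst]
    exact hasDerivAt_const _ _
  exact (hf.comp_hasDerivAt 0 hγ).unique hconst'

theorem fderiv_apply_eq_fderiv_fderiv_apply_of_fderiv_apply_sub_eq_zero {f : E → F}
    (hf : DifferentiableAt ℝ (fderiv ℝ f) 0) (A : E →L[ℝ] E) (b : E)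
    (h : ∀ k, fderiv ℝ f k (A k - b) = 0) (u : E) :
    fderiv ℝ f 0 (A u) = fderiv ℝ (fderiv ℝ f) 0 u b := by
  have hderiv := hf.hasFDerivAt.clm_apply (A.hasFDerivAt.sub_const b)
  have hzero : HasFDerivAt (fun k => fderiv ℝ f k (A k - b)) (0 : E →L[ℝ] F) 0 := by
    rw [show (fun k => fderiv ℝ f k (A k - b)) = fun _ => 0 from funext h]
    exact hasFDerivAt_const _ _
  simpa [add_neg_eq_zero] using congrArg (· u) (hderiv.unique hzero)

end

theorem Matrix.hasDerivAt_mulVec {m n : Type*} [Fintype n] {A : ℝ → Matrix m n ℝ}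
    {A' : Matrix m n ℝ} {t : ℝ} (hA : ∀ i j, HasDerivAt (fun θ => A θ i j) (A' i j) t)
    (k : n → ℝ) : HasDerivAt (fun θ => A θ *ᵥ k) (A' *ᵥ k) t :=
  hasDerivAt_pi.2 fun i => HasDerivAt.fun_sum fun j _ => (hA i j).mul_const (k j)

theorem ContinuousLinearMap.apply_eq_sum_mul_apply_single {ι : Type*} [Fintype ι]
    [DecidableEq ι] (L : (ι → ℝ) →L[ℝ] ℝ) (x : ι → ℝ) :
    L x = ∑ j, x j * L (Pi.single j 1) := by
  conv_lhs => rw [pi_eq_sum_univ' x]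
  simp [map_sum]

theorem first_order_cumulant_hierarchy_general
    {n : ℕ}
    (Λ : (Fin n → ℝ) → ℝ) (hΛ : ContDiff ℝ 2 Λ)
    (𝓡 : ℝ → Matrix (Fin n) (Fin n) ℝ) (w : ℝ → (Fin n → ℝ))
    (N : Matrix (Fin n) (Fin n) ℝ) (w' : Fin n → ℝ)
    (h𝓡' : ∀ i j, HasDerivAt (fun θ => 𝓡 θ i j) (N i j) 0)
    (hw' : ∀ j, HasDerivAt (fun θ => w θ j) (w' j) 0)
    (h𝓡0 : 𝓡 0 = 1) (hw0 : w 0 = 0)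
    (hsym : ∀ θ : ℝ, ∀ k : Fin n → ℝ, Λ k = Λ ((𝓡 θ)ᵀ *ᵥ k - w θ)) :
    ∀ i : Fin n,
      ∑ j : Fin n, N i j * fderiv ℝ Λ 0 (Pi.single j 1)
        = ∑ j : Fin n, w' j *
            fderiv ℝ (fun x => fderiv ℝ Λ x (Pi.single j 1)) 0 (Pi.single i 1) := by
  have hD2 : DifferentiableAt ℝ (fderiv ℝ Λ) 0 :=
    (hΛ.fderiv_right (m := 1) (by norm_num)).differentiable one_ne_zero 0
  set L : (Fin n → ℝ) →L[ℝ] (Fin n → ℝ) := LinearMap.toContinuousLinearMap Nᵀ.mulVecLin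
  have hinfinitesimal : ∀ k, fderiv ℝ Λ k (L k - w') = 0 := by
    intro k
    have hγ : HasDerivAt (fun θ => (𝓡 θ)ᵀ *ᵥ k - w θ) (Nᵀ *ᵥ k - w') 0 :=
      (Matrix.hasDerivAt_mulVec (A := fun θ => (𝓡 θ)ᵀ) (fun i j => h𝓡' j i) k).sub
        (hasDerivAt_pi.2 hw')
    exact (hΛ.differentiable (by norm_num) k).hasFDerivAt.apply_eq_zero_of_comp_eq_const
      (by simp [h𝓡0, hw0]) hγ fun θ => (hsym θ k).symm
  intro i
  have hsecond : ∀ j, fderiv ℝ (fun x => fderiv ℝ Λ x (Pi.single j 1)) 0 (Pi.single i 1)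
      = fderiv ℝ (fderiv ℝ Λ) 0 (Pi.single i 1) (Pi.single j 1) := fun j => by
    simp [fderiv_clm_apply hD2 (differentiableAt_const _)]
  simp_rw [hsecond, ← ContinuousLinearMap.apply_eq_sum_mul_apply_single,
    ← fderiv_apply_eq_fderiv_fderiv_apply_of_fderiv_apply_sub_eq_zero hD2 L w' hinfinitesimal]
  congr 1
  ext j
  simp [L]

/-- **First-order cumulant hierarchy.**
Let `Λ : ℝⁿ → ℝ` be `C²`, let `θ ↦ 𝓡 θ` (matrices) and `θ ↦ w θ` (vectors) be
differentiable at `θ = 0` (entrywise, with derivatives `N` and `w'`), with `𝓡 0 = 1`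
and `w 0 = 0`, and suppose the symmetry `Λ k = Λ ((𝓡 θ)ᵀ *ᵥ k - w θ)` holds for all
`θ` and `k`.  Then for every `i`,
`∑ j, N i j * ∂ⱼΛ(0) = ∑ j, w' j * ∂ᵢ∂ⱼΛ(0)`, where `∂ⱼΛ(0)` is the `j`-th partial
derivative of `Λ` at `0` and `∂ᵢ∂ⱼΛ(0)` the second partial derivatives. -/
theorem first_order_cumulant_hierarchy
    {n : ℕ} (hn : 1 ≤ n)
    (Λ : (Fin n → ℝ) → ℝ) (hΛ : ContDiff ℝ 2 Λ)
    (𝓡 : ℝ → Matrix (Fin n) (Fin n) ℝ) (w : ℝ → (Fin n → ℝ))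
    (N : Matrix (Fin n) (Fin n) ℝ) (w' : Fin n → ℝ)
    (h𝓡' : ∀ i j, HasDerivAt (fun θ => 𝓡 θ i j) (N i j) 0)
    (hw' : ∀ j, HasDerivAt (fun θ => w θ j) (w' j) 0)
    (h𝓡0 : 𝓡 0 = 1) (hw0 : w 0 = 0)
    (hsym : ∀ θ : ℝ, ∀ k : Fin n → ℝ, Λ k = Λ ((𝓡 θ)ᵀ *ᵥ k - w θ)) :
    ∀ i : Fin n,
      ∑ j : Fin n, N i j * fderiv ℝ Λ 0 (Pi.single j 1)
        = ∑ j : Fin n, w' j *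
            fderiv ℝ (fun x => fderiv ℝ Λ x (Pi.single j 1)) 0 (Pi.single i 1) :=
  first_order_cumulant_hierarchy_general Λ hΛ 𝓡 w N w' h𝓡' hw' h𝓡0 hw0 hsym
end

section
/- (Rotation invariance of the Langevin scaled cumulant generating function) For θ ∈ ℝ let 𝓡_θ be the 3×3 real matrix with rows (cos²θ, sin²θ, −2 sinθ cosθ), (sin²θ, cos²θ, 2 sinθ cosθ), (sinθ cosθ, −sinθ cosθ, cos²θ − sin²θ). Fix γ, β > 0 and let S := { k = (k₁,k₂,k₃) ∈ ℝ³ : k₁+k₂ ≤ γβ/2 and k₃² − 4k₁k₂ ≤ β²γ²/4 − βγ(k₁+k₂) }, and for k ∈ S define Λ₀(k) := γ − γ·√( (1/2 − (k₁+k₂)/(βγ)) + √( (1/2 − (k₁+k₂)/(βγ))² − (k₃² + (k₁−k₂)²)/(β²γ²) ) ). Then for every θ ∈ ℝ: (i) writing k̄ := 𝓡_θᵀ k, one has k̄₁ + k̄₂ = k₁ + k₂ and (k̄₁ − k̄₂)² + k̄₃² = (k₁ − k₂)² + k₃² for all k ∈ ℝ³; (ii) 𝓡_θᵀ maps S into S;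 (iii) Λ₀(𝓡_θᵀ k) = Λ₀(k) for all k ∈ S; moreover, writing ā := 𝓡_θ a, one has ā₁ + ā₂ = a₁ + a₂ and ā₁ā₂ − ā₃² = a₁a₂ − a₃² for all a ∈ ℝ³. -/
open Matrix Real

/-- The matrix `𝓡_θ` acting on the quadratic observables `(p₁², p₂², p₁p₂)` induced by a
rotation of angle `θ` in the two-dimensional momentum space. -/
noncomputable def rotObs (θ : ℝ) : Matrix (Fin 3) (Fin 3) ℝ :=
  Matrix.of
    ![![Real.cos θ ^ 2, Real.sin θ ^ 2, -2 * Real.sin θ * Real.cos θ],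
      ![Real.sin θ ^ 2, Real.cos θ ^ 2, 2 * Real.sin θ * Real.cos θ],
      ![Real.sin θ * Real.cos θ, -(Real.sin θ * Real.cos θ),
        Real.cos θ ^ 2 - Real.sin θ ^ 2]]

/-- The domain `S` on which the scaled cumulant generating function is finite. -/
def domainS (γ β : ℝ) : Set (Fin 3 → ℝ) :=
  {k | k 0 + k 1 ≤ γ * β / 2 ∧
    (k 2) ^ 2 - 4 * k 0 * k 1 ≤ β ^ 2 * γ ^ 2 / 4 - β * γ * (k 0 + k 1)}

/-- The scaled cumulant generating function of the Langevin example. -/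
noncomputable def langevinSCGF (γ β : ℝ) (k : Fin 3 → ℝ) : ℝ :=
  γ - γ * Real.sqrt ((1 / 2 - (k 0 + k 1) / (β * γ)) +
    Real.sqrt ((1 / 2 - (k 0 + k 1) / (β * γ)) ^ 2 -
      ((k 2) ^ 2 + (k 0 - k 1) ^ 2) / (β ^ 2 * γ ^ 2)))

lemma rot_inv (θ : ℝ) (k : Fin 3 → ℝ) :
    ((rotObs θ)ᵀ *ᵥ k) 0 + ((rotObs θ)ᵀ *ᵥ k) 1 = k 0 + k 1 ∧
    (((rotObs θ)ᵀ *ᵥ k) 0 - ((rotObs θ)ᵀ *ᵥ k) 1) ^ 2 + (((rotObs θ)ᵀ *ᵥ k) 2) ^ 2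
      = (k 0 - k 1) ^ 2 + (k 2) ^ 2 := by
  have h := Real.sin_sq_add_cos_sq θ
  simp only [rotObs, Matrix.mulVec, dotProduct, Fin.sum_univ_three, Matrix.transpose_apply,
    Matrix.of_apply, Matrix.cons_val', Matrix.cons_val_zero, Matrix.cons_val_one, Matrix.head_cons,
    Matrix.empty_val', Matrix.cons_val_fin_one, Matrix.head_fin_const, Matrix.cons_val_two,
    Matrix.tail_cons]
  constructor
  · linear_combination (k 0 + k 1) * h
  · linear_combination ((Real.sin θ ^ 2 + Real.cos θ ^ 2 + 1) * ((k 0 - k 1) ^ 2 + k 2 ^ 2)) * h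

/-- **Rotation invariance of the Langevin scaled cumulant generating function.**
For every `θ`: (i) `k̄ = (𝓡_θ)ᵀ *ᵥ k` preserves `k₁ + k₂` and `(k₁ - k₂)² + k₃²`;
(ii) `(𝓡_θ)ᵀ` maps `S` into `S`; (iii) `Λ₀ ((𝓡_θ)ᵀ *ᵥ k) = Λ₀ k` on `S`; moreover
`ā = 𝓡_θ *ᵥ a` preserves `a₁ + a₂` and `a₁ a₂ - a₃²`. -/
theorem langevin_rotation_invariance (γ β : ℝ) (hγ : 0 < γ) (hβ : 0 < β) (θ : ℝ) :
    (∀ k : Fin 3 → ℝ,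
      ((rotObs θ)ᵀ *ᵥ k) 0 + ((rotObs θ)ᵀ *ᵥ k) 1 = k 0 + k 1 ∧
      (((rotObs θ)ᵀ *ᵥ k) 0 - ((rotObs θ)ᵀ *ᵥ k) 1) ^ 2 + (((rotObs θ)ᵀ *ᵥ k) 2) ^ 2
        = (k 0 - k 1) ^ 2 + (k 2) ^ 2) ∧
    (∀ k ∈ domainS γ β, (rotObs θ)ᵀ *ᵥ k ∈ domainS γ β) ∧
    (∀ k ∈ domainS γ β, langevinSCGF γ β ((rotObs θ)ᵀ *ᵥ k) = langevinSCGF γ β k) ∧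
    (∀ a : Fin 3 → ℝ,
      (rotObs θ *ᵥ a) 0 + (rotObs θ *ᵥ a) 1 = a 0 + a 1 ∧
      (rotObs θ *ᵥ a) 0 * (rotObs θ *ᵥ a) 1 - ((rotObs θ *ᵥ a) 2) ^ 2
        = a 0 * a 1 - (a 2) ^ 2) := by
  refine ⟨rot_inv θ, ?_, ?_, ?_⟩
  · rintro k ⟨h1, h2⟩
    obtain ⟨e1, e2⟩ := rot_inv θ k
    constructor
    · rw [e1]; exact h1
    · nlinarith [e1, e2]
  · rintro k -
    obtain ⟨e1, e2⟩ := rot_inv θ k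
    have e2' : (((rotObs θ)ᵀ *ᵥ k) 2) ^ 2 + (((rotObs θ)ᵀ *ᵥ k) 0 - ((rotObs θ)ᵀ *ᵥ k) 1) ^ 2
        = (k 2) ^ 2 + (k 0 - k 1) ^ 2 := by linarith
    simp only [langevinSCGF, e1, e2']
  · intro a
    have h := Real.sin_sq_add_cos_sq θ
    simp only [rotObs, Matrix.mulVec, dotProduct, Fin.sum_univ_three,
      Matrix.of_apply, Matrix.cons_val', Matrix.cons_val_zero, Matrix.cons_val_one,
      Matrix.head_cons, Matrix.empty_val', Matrix.cons_val_fin_one, Matrix.head_fin_const,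
      Matrix.cons_val_two, Matrix.tail_cons]
    constructor
    · linear_combination (a 0 + a 1) * h
    · linear_combination ((Real.sin θ ^ 2 + Real.cos θ ^ 2 + 1) * (a 0 * a 1 - a 2 ^ 2)) * h
end
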